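/- arXiv:1901.08171 — 2 statements merged into one kernel-verified Lean document; each statement's English description precedes it below -/
import Mathlib

section
/- If K_5 is a minor of G, then G contains a subdivision of K_{3,3} or a subdivision of K_5 as a subgraph. -/
open SimpleGraph

/-- `IsMinor H G` : `H` is a minor of `G`, via the branch-set definition: pairwise disjoint
nonempty connected subsets of `V(G)`, one per vertex of `H`, with an edge of `G` between the
sets corresponding to every edge of `H`. -/
def IsMinor {W V : Type} (H : SimpleGraph W) (G : SimpleGraph V) : Prop :=
  ∃ f : W → Set V,
    (∀ i, (f i).Nonempty) ∧
    (Pairwise fun i j => Disjoint (f i) (f j)) ∧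
    (∀ i, (G.induce (f i)).Connected) ∧
    (∀ i j, H.Adj i j → ∃ u ∈ f i, ∃ v ∈ f j, G.Adj u v)

/-- The graph obtained from `H` by subdividing the edge `xy`: the edge `xy` is deleted and the
new vertex `none` is adjacent exactly to `x` and `y`. -/
def SubdivideEdge {V : Type} (H : SimpleGraph V) (x y : V) : SimpleGraph (Option V) :=
  SimpleGraph.fromRel fun a b =>
    (∃ u v : V, a = some u ∧ b = some v ∧ H.Adj u v ∧ s(u, v) ≠ s(x, y)) ∨
    (a = none ∧ (b = some x ∨ b = some y))

/-- `IsSubdivision G H` : `G` can be obtained from `H` by a finite sequence of edge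
subdivisions (up to isomorphism). -/
inductive IsSubdivision : ∀ {V : Type}, SimpleGraph V → ∀ {W : Type}, SimpleGraph W → Prop
  | of_iso {V W : Type} {G : SimpleGraph V} {H : SimpleGraph W} (e : G ≃g H) :
      IsSubdivision G H
  | step {V W : Type} {G : SimpleGraph V} {H : SimpleGraph W} (x y : W) (hxy : H.Adj x y)
      (h : IsSubdivision G (SubdivideEdge H x y)) : IsSubdivision G H

/-- `H` is (isomorphic to) a subgraph of `G`. -/
def IsSubgraphCopy {W V : Type} (H : SimpleGraph W) (G : SimpleGraph V) : Prop :=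
  ∃ f : H →g G, Function.Injective f

/-- `H` is a topological minor of `G`: some subgraph of `G` is a subdivision of `H`. -/
def IsTopologicalMinor {W V : Type} (H : SimpleGraph W) (G : SimpleGraph V) : Prop :=
  ∃ (U : Type) (K : SimpleGraph U), IsSubdivision K H ∧ IsSubgraphCopy K G

/-- The maximum vertex degree `Δ(G)` of a finite graph. -/
noncomputable def maxDeg {V : Type} [Fintype V] (G : SimpleGraph V) : ℕ :=
  Finset.univ.sup fun v => (G.neighborSet v).ncard

/-- `edgeCount G A B` : the number of edges of `G` with one endpoint in `A`
and the other in `B`. -/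
noncomputable def edgeCount {V : Type} (G : SimpleGraph V) (A B : Set V) : ℕ :=
  {e ∈ G.edgeSet | ∃ u ∈ A, ∃ v ∈ B, e = s(u, v)}.ncard

/-- The Petersen graph: `(false, i)` is the outer vertex `uᵢ`, `(true, i)` is the inner
vertex `vᵢ`; edges are `uᵢuᵢ₊₁`, `uᵢvᵢ`, `vᵢvᵢ₊₂` with indices mod 5. -/
def Petersen : SimpleGraph (Bool × ZMod 5) :=
  SimpleGraph.fromRel fun a b =>
    (a.1 = false ∧ b.1 = false ∧ b.2 = a.2 + 1) ∨
    (a.1 = false ∧ b.1 = true ∧ a.2 = b.2) ∨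
    (a.1 = true ∧ b.1 = true ∧ b.2 = a.2 + 2)

/-- `G` is `k`-connected: more than `k` vertices, and deleting any set of fewer than `k`
vertices leaves a connected graph. -/
def KConnected {V : Type} [Fintype V] (k : ℕ) (G : SimpleGraph V) : Prop :=
  k < Fintype.card V ∧ ∀ S : Set V, S.ncard < k → (G.induce Sᶜ).Connected

/-!
Choose an edge of `G` between any two branch sets of the `K₅` model; its end in the branch set
`Bᵢ` is a foot of `Bᵢ`, so every `Bᵢ` is connected and carries four feet. In a connected graph
four vertices are joined either by a spider (internally disjoint paths from one center) or by a
double spider (two disjoint spiders, each reaching two of them, joined by an edge): join three of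
them by a spider and follow a path from the fourth until it first hits that spider. If every `Bᵢ`
carries a spider, the spiders and the chosen edges form a subdivided `K₅`. Otherwise some `Bᵢ`
splits into two halves, and these halves together with spiders reaching three feet in each of the
other four branch sets form a subdivided `K₃,₃`.

An edge-by-edge subdivision is recovered from the paths of such a configuration by induction on
the number of inner path vertices: the first inner vertex of a path of length at least two becomes
the new vertex of a subdivided edge.
-/

open SimpleGraph.Walk

variable {V W : Type} {G : SimpleGraph V} {H : SimpleGraph W}

namespace SimpleGraph.Walk

variable {u v w : V}

theorem isPath_append_cons {a : V} {p : G.Walk u v} {q : G.Walk w a} (h : G.Adj v w)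
    (hp : p.IsPath) (hq : q.IsPath) (hpq : ∀ x ∈ p.support, x ∉ q.support) :
    (p.append (cons h q)).IsPath := by
  rw [isPath_def, support_append, support_cons, List.tail_cons]
  exact hp.support_nodup.append hq.support_nodup fun x hx hx' => hpq x hx hx'

theorem mem_support_append_cons_reverse {a x : V} {p : G.Walk u v} {q : G.Walk w a}
    (h : G.Adj v a) :
    x ∈ (p.append (cons h q.reverse)).support ↔ x ∈ p.support ∨ x ∈ q.support := by
  simp only [mem_support_append_iff, support_cons, List.mem_cons, support_reverse,
    List.mem_reverse]
  constructor
  · rintro (hx | rfl | hx)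
    exacts [.inl hx, .inl p.end_mem_support, .inr hx]
  · rintro (hx | hx)
    exacts [.inl hx, .inr (.inr hx)]

theorem IsPath.eq_of_mem_takeUntil_of_mem_dropUntil [DecidableEq V] {p : G.Walk u v}
    (hp : p.IsPath) (hw : w ∈ p.support) {x : V} (hx : x ∈ (p.takeUntil w hw).support)
    (hx' : x ∈ (p.dropUntil w hw).support) : x = w := by
  by_contra hxw
  have hp' : ((p.takeUntil w hw).append (p.dropUntil w hw)).IsPath :=
    (p.take_spec hw).symm ▸ hp
  exact hp'.ne_of_mem_support_of_append hxw hx hx' rfl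

theorem exists_first_mem (p : G.Walk u v) {T : Set V} (hv : v ∈ T) :
    ∃ c ∈ T, ∃ q : G.Walk u c, q.support ⊆ p.support ∧ ∀ x ∈ q.support, x ∈ T → x = c := by
  induction p with
  | nil => exact ⟨_, hv, nil, by simp, by simp⟩
  | @cons u u' v h p ih =>
    by_cases hu : u ∈ T
    · exact ⟨u, hu, nil, by simp, by simp⟩
    · obtain ⟨c, hc, q, hqp, hqT⟩ := ih hv
      refine ⟨c, hc, cons h q, ?_, ?_⟩
      · rw [support_cons, support_cons]
        exact List.cons_subset_cons _ hqp
      · simp only [support_cons, List.mem_cons, forall_eq_or_imp]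
        exact ⟨fun h => absurd h hu, hqT⟩

end SimpleGraph.Walk

theorem exists_isPath_first_mem {u v : V} {s T : Set V} (hs : (G.induce s).Preconnected)
    (hu : u ∈ s) (hv : v ∈ s) (hvT : v ∈ T) :
    ∃ c ∈ T, ∃ q : G.Walk u c, q.IsPath ∧ (∀ x ∈ q.support, x ∈ s) ∧
      ∀ x ∈ q.support, x ∈ T → x = c := by
  classical
  obtain ⟨p⟩ := hs ⟨u, hu⟩ ⟨v, hv⟩
  obtain ⟨c, hc, q, hqp, hqT⟩ := (p.map (Embedding.induce s).toHom).exists_first_mem hvT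
  have hq := q.support_bypass_subset_support
  refine ⟨c, hc, q.bypass, q.bypass_isPath, fun x hx => ?_, fun x hx => hqT x (hq hx)⟩
  obtain ⟨y, -, rfl⟩ := List.mem_map.mp (support_map _ p ▸ hqp (hq hx))
  exact y.2

theorem IsTopologicalMinor.of_subdivideEdge {x y : W} (hxy : H.Adj x y)
    (h : IsTopologicalMinor (SubdivideEdge H x y) G) : IsTopologicalMinor H G :=
  let ⟨U, K, hK, hKG⟩ := h
  ⟨U, K, .step x y hxy hK, hKG⟩

theorem subdivideEdge_adj_some_some {x y i j : W} :
    (SubdivideEdge H x y).Adj (some i) (some j) ↔ H.Adj i j ∧ s(i, j) ≠ s(x, y) := by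
  simp only [SubdivideEdge, fromRel_adj, ne_eq, Option.some.injEq, reduceCtorEq, false_and,
    or_false, exists_and_left, exists_eq_left', Sym2.eq_swap (a := j)]
  constructor
  · rintro ⟨-, h | ⟨h, hs⟩⟩
    · exact h
    · exact ⟨h.symm, hs⟩
  · exact fun h => ⟨h.1.ne, .inl h⟩

theorem subdivideEdge_adj_none_some {x y u : W} :
    (SubdivideEdge H x y).Adj none (some u) ↔ u = x ∨ u = y := by
  simp [SubdivideEdge, eq_comm]

/-- A subdivision of `H` in `G`, given by its branch vertices and the paths that replace the
edges of `H`. -/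
structure SubdivisionModel (H : SimpleGraph W) (G : SimpleGraph V) where
  branch : W → V
  path : ∀ i j, H.Adj i j → G.Walk (branch i) (branch j)
  branch_injective : Function.Injective branch
  isPath : ∀ i j h, (path i j h).IsPath
  eq_or_eq_of_branch_mem : ∀ i j h w, branch w ∈ (path i j h).support → w = i ∨ w = j
  sym2_eq_of_mem : ∀ i j k l h h' v, v ∉ Set.range branch →
    v ∈ (path i j h).support → v ∈ (path k l h').support → s(i, j) = s(k, l)

namespace SubdivisionModel

variable (M : SubdivisionModel H G) {x y : W} {m : V} (hm : G.Adj (M.branch x) m)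
  (q : G.Walk m (M.branch y))

open Classical in
noncomputable def subdivideLeg (u : W) (hu : (SubdivideEdge H x y).Adj none (some u)) :
    G.Walk m (M.branch u) :=
  if hux : u = x then hm.symm.toWalk.copy rfl (by rw [hux])
  else q.copy rfl (by rw [(subdivideEdge_adj_none_some.mp hu).resolve_left hux])

noncomputable def subdividePath : ∀ a c, (SubdivideEdge H x y).Adj a c →
    G.Walk (a.elim m M.branch) (c.elim m M.branch)
  | some i, some j, h => M.path i j (subdivideEdge_adj_some_some.mp h).1
  | none, some u, h => M.subdivideLeg hm q u h
  | some u, none, h => (M.subdivideLeg hm q u h.symm).reverse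
  | none, none, h => absurd h (SimpleGraph.irrefl _)

variable {M hm q}

theorem isPath_subdivideLeg (hq : q.IsPath) (u : W) (hu) :
    (M.subdivideLeg hm q u hu).IsPath := by
  unfold subdivideLeg
  split_ifs
  · exact (isPath_copy _ _ _).mpr hm.symm.isPath_toWalk
  · exact (isPath_copy _ _ _).mpr hq

theorem mem_support_subdivideLeg (hxy : x ≠ y) {u : W} {hu} {v : V}
    (hv : v ∈ (M.subdivideLeg hm q u hu).support) :
    (u = x ∧ (v = m ∨ v = M.branch x)) ∨ (u = y ∧ v ∈ q.support) := by
  unfold subdivideLeg at hv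
  split_ifs at hv with hux
  · simp_all
  · rw [support_copy] at hv
    exact .inr ⟨(subdivideEdge_adj_none_some.mp hu).resolve_left hux, hv⟩

theorem mem_support_subdividePath (hxy : x ≠ y) {a c : Option W} {h} {v : V}
    (hv : v ∈ (M.subdividePath hm q a c h).support) :
    (∃ i j hij, s(a, c) = s(some i, some j) ∧ s(i, j) ≠ s(x, y) ∧
      v ∈ (M.path i j hij).support) ∨
    (s(a, c) = s(none, some x) ∧ (v = m ∨ v = M.branch x)) ∨
    (s(a, c) = s(none, some y) ∧ v ∈ q.support) := by
  match a, c, h with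
  | some i, some j, h =>
    exact .inl ⟨i, j, _, rfl, (subdivideEdge_adj_some_some.mp h).2, hv⟩
  | none, some u, h =>
    replace hv : v ∈ (M.subdivideLeg hm q u h).support := hv
    rcases mem_support_subdivideLeg hxy hv with ⟨rfl, hv⟩ | ⟨rfl, hv⟩
    · exact .inr (.inl ⟨rfl, hv⟩)
    · exact .inr (.inr ⟨rfl, hv⟩)
  | some u, none, h =>
    replace hv : v ∈ (M.subdivideLeg hm q u h.symm).support := by
      simpa [subdividePath] using hv
    rcases mem_support_subdivideLeg hxy hv with ⟨rfl, hv⟩ | ⟨rfl, hv⟩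
    · exact .inr (.inl ⟨Sym2.eq_swap, hv⟩)
    · exact .inr (.inr ⟨Sym2.eq_swap, hv⟩)
  | none, none, h => exact absurd h (SimpleGraph.irrefl _)

section Subdivide

variable (hxy : H.Adj x y) (hP : M.path x y hxy = cons hm q)
include hP

theorem mem_support_path_of_mem {v : V} (hv : v ∈ q.support) :
    v ∈ (M.path x y hxy).support := by
  rw [hP, support_cons]
  exact List.mem_cons_of_mem _ hv

theorem isPath_of_path_eq_cons : q.IsPath :=
  (hP ▸ M.isPath x y hxy).of_cons

theorem branch_notMem_of_path_eq_cons : M.branch x ∉ q.support :=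
  ((cons_isPath_iff hm q).mp (hP ▸ M.isPath x y hxy)).2

theorem notMem_range_of_path_eq_cons (hmy : m ≠ M.branch y) : m ∉ Set.range M.branch := by
  rintro ⟨w, rfl⟩
  rcases M.eq_or_eq_of_branch_mem x y hxy w (mem_support_path_of_mem hxy hP q.start_mem_support)
    with rfl | rfl
  · exact G.irrefl hm
  · exact hmy rfl

/-- The first inner vertex `m` of the path of `xy` becomes the branch vertex of the new vertex
of `SubdivideEdge H x y`. -/
noncomputable def subdivide (hmy : m ≠ M.branch y) :
    SubdivisionModel (SubdivideEdge H x y) G where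
  branch a := a.elim m M.branch
  path := M.subdividePath hm q
  branch_injective := by
    have hm' := notMem_range_of_path_eq_cons hxy hP hmy
    rintro (_ | i) (_ | j) h
    · rfl
    · exact absurd ⟨j, h.symm⟩ hm'
    · exact absurd ⟨i, h⟩ hm'
    · exact congrArg some (M.branch_injective h)
  isPath := by
    have hq := isPath_of_path_eq_cons hxy hP
    rintro (_ | i) (_ | j) h
    · exact absurd h (SimpleGraph.irrefl _)
    · exact isPath_subdivideLeg (hm := hm) hq j h
    · exact (isPath_subdivideLeg (hm := hm) hq i h.symm).reverse
    · exact M.isPath i j _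
  eq_or_eq_of_branch_mem := by
    intro a c h w hw
    rw [← Sym2.mem_iff]
    rcases mem_support_subdividePath hxy.ne hw with
      ⟨i, j, hij, hac, hs, hv⟩ | ⟨hac, hv⟩ | ⟨hac, hv⟩ <;> rw [hac] <;> rcases w with _ | w
    · exact absurd (M.sym2_eq_of_mem i j x y hij hxy m (notMem_range_of_path_eq_cons hxy hP hmy)
        hv (mem_support_path_of_mem hxy hP q.start_mem_support)) hs
    · exact Sym2.mem_iff.mpr ((M.eq_or_eq_of_branch_mem i j hij w hv).imp
        (congrArg some) (congrArg some))
    · exact Sym2.mem_mk_left _ _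
    · rcases hv with hv | hv
      · exact absurd ⟨w, hv⟩ (notMem_range_of_path_eq_cons hxy hP hmy)
      · rw [M.branch_injective hv]
        exact Sym2.mem_mk_right _ _
    · exact Sym2.mem_mk_left _ _
    · rcases M.eq_or_eq_of_branch_mem x y hxy w (mem_support_path_of_mem hxy hP hv) with rfl | rfl
      · exact absurd hv (branch_notMem_of_path_eq_cons hxy hP)
      · exact Sym2.mem_mk_right _ _
  sym2_eq_of_mem := by
    intro a c a' c' h h' v hv hva hva'
    have hvb : v ∉ Set.range M.branch := fun ⟨w, hw⟩ => hv ⟨some w, hw⟩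
    have hvx : ¬(v = m ∨ v = M.branch x) := by
      rintro (rfl | rfl)
      exacts [hv ⟨none, rfl⟩, hv ⟨some x, rfl⟩]
    rcases mem_support_subdividePath hxy.ne hva with
      ⟨i, j, hij, hac, hs, hv1⟩ | ⟨-, hv1⟩ | ⟨hac, hv1⟩
    · rcases mem_support_subdividePath hxy.ne hva' with
        ⟨k, l, hkl, hac', -, hv2⟩ | ⟨-, hv2⟩ | ⟨-, hv2⟩
      · rw [hac, hac', ← Sym2.map_mk, ← Sym2.map_mk,
          M.sym2_eq_of_mem i j k l hij hkl v hvb hv1 hv2]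
      · exact absurd hv2 hvx
      · exact absurd (M.sym2_eq_of_mem i j x y hij hxy v hvb hv1
          (mem_support_path_of_mem hxy hP hv2)) hs
    · exact absurd hv1 hvx
    · rcases mem_support_subdividePath hxy.ne hva' with
        ⟨k, l, hkl, -, hs', hv2⟩ | ⟨-, hv2⟩ | ⟨hac', -⟩
      · exact absurd (M.sym2_eq_of_mem k l x y hkl hxy v hvb hv2
          (mem_support_path_of_mem hxy hP hv1)) hs'
      · exact absurd hv2 hvx
      · rw [hac, hac']

end Subdivide

theorem isTopologicalMinor {V W : Type} {G : SimpleGraph V} {H : SimpleGraph W} [Finite V]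
    (M : SubdivisionModel H G) : IsTopologicalMinor H G := by
  by_cases hadj : ∀ i j, H.Adj i j → G.Adj (M.branch i) (M.branch j)
  · exact ⟨W, H, .of_iso .refl, ⟨⟨M.branch, hadj _ _⟩, M.branch_injective⟩⟩
  push Not at hadj
  obtain ⟨x, y, hxy, hnadj⟩ := hadj
  obtain ⟨m, hm, q, hP⟩ := exists_eq_cons_of_ne (M.branch_injective.ne hxy.ne) (M.path x y hxy)
  have hmy : m ≠ M.branch y := by
    rintro rfl
    exact hnadj hm
  exact (M.subdivide hxy hP hmy).isTopologicalMinor.of_subdivideEdge hxy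
termination_by Nat.card V - Nat.card W
decreasing_by
  have : Finite W := Finite.of_injective _ M.branch_injective
  have := Nat.card_le_card_of_injective _ (M.subdivide hxy hP hmy).branch_injective
  rw [Finite.card_option] at this ⊢
  omega

end SubdivisionModel

structure Spider (G : SimpleGraph V) (s : Set V) {ι : Type*} (t : ι → V) where
  center : V
  center_mem : center ∈ s
  leg : ∀ n, G.Walk center (t n)
  isPath_leg : ∀ n, (leg n).IsPath
  mem_of_mem_leg : ∀ n, ∀ v ∈ (leg n).support, v ∈ s
  eq_center_of_mem : ∀ n n', n ≠ n' → ∀ v ∈ (leg n).support, v ∈ (leg n').support → v = center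

namespace Spider

variable {s : Set V} {ι κ : Type*} {t : ι → V}

theorem eq_of_mem_leg (S : Spider G s t) {n n' : ι} {v : V} (hv : v ∈ (S.leg n).support)
    (hv' : v ∈ (S.leg n').support) (hvc : v ≠ S.center) : n = n' := by
  by_contra h
  exact hvc (S.eq_center_of_mem n n' h v hv hv')

def reindex (S : Spider G s t) (φ : κ → ι) (hφ : Function.Injective φ) (t' : κ → V)
    (ht : ∀ k, t (φ k) = t' k) : Spider G s t' where
  center := S.center
  center_mem := S.center_mem
  leg k := (S.leg (φ k)).copy rfl (ht k)
  isPath_leg k := (isPath_copy _ _ _).mpr (S.isPath_leg _)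
  mem_of_mem_leg k v hv := S.mem_of_mem_leg _ v (by rwa [support_copy] at hv)
  eq_center_of_mem k k' hk v hv hv' := S.eq_center_of_mem _ _ (hφ.ne hk) v
    (by rwa [support_copy] at hv) (by rwa [support_copy] at hv')

def mk₃ {c a₀ a₁ a₂ : V} (hc : c ∈ s) (P₀ : G.Walk c a₀) (P₁ : G.Walk c a₁)
    (P₂ : G.Walk c a₂) (h₀ : P₀.IsPath) (h₁ : P₁.IsPath) (h₂ : P₂.IsPath)
    (hs₀ : ∀ v ∈ P₀.support, v ∈ s) (hs₁ : ∀ v ∈ P₁.support, v ∈ s)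
    (hs₂ : ∀ v ∈ P₂.support, v ∈ s) (h₀₁ : ∀ v ∈ P₀.support, v ∈ P₁.support → v = c)
    (h₀₂ : ∀ v ∈ P₀.support, v ∈ P₂.support → v = c)
    (h₁₂ : ∀ v ∈ P₁.support, v ∈ P₂.support → v = c) : Spider G s ![a₀, a₁, a₂] where
  center := c
  center_mem := hc
  leg
    | 0 => P₀
    | 1 => P₁
    | 2 => P₂
  isPath_leg
    | 0 => h₀
    | 1 => h₁
    | 2 => h₂
  mem_of_mem_leg
    | 0 => hs₀
    | 1 => hs₁
    | 2 => hs₂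
  eq_center_of_mem
    | 0, 1, _ => h₀₁
    | 0, 2, _ => h₀₂
    | 1, 2, _ => h₁₂
    | 1, 0, _ => fun v hv hv' => h₀₁ v hv' hv
    | 2, 0, _ => fun v hv hv' => h₀₂ v hv' hv
    | 2, 1, _ => fun v hv hv' => h₁₂ v hv' hv
    | 0, 0, h | 1, 1, h | 2, 2, h => absurd rfl h

def snoc {n : ℕ} {t : Fin (n + 1) → V} (S : Spider G s fun k : Fin n => t k.castSucc)
    (Q : G.Walk S.center (t (Fin.last n))) (hQ : Q.IsPath) (hQs : ∀ v ∈ Q.support, v ∈ s)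
    (hQS : ∀ k, ∀ v ∈ Q.support, v ∈ (S.leg k).support → v = S.center) : Spider G s t where
  center := S.center
  center_mem := S.center_mem
  leg := Fin.lastCases Q S.leg
  isPath_leg := Fin.lastCases (by simpa using hQ) fun k => by simpa using S.isPath_leg k
  mem_of_mem_leg := Fin.lastCases (by simpa using hQs) fun k => by
    simpa using S.mem_of_mem_leg k
  eq_center_of_mem k k' hk := by
    induction k using Fin.lastCases <;> induction k' using Fin.lastCases <;>
      simp only [Fin.lastCases_last, Fin.lastCases_castSucc]
    · exact absurd rfl hk
    · exact hQS _
    · exact fun v hv hv' => hQS _ v hv' hv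
    · exact S.eq_center_of_mem _ _ fun h => hk (congrArg _ h)

end Spider

theorem nonempty_spider_fin_three {s : Set V} (hs : (G.induce s).Preconnected) (t : Fin 3 → V)
    (ht : ∀ n, t n ∈ s) : Nonempty (Spider G s t) := by
  classical
  obtain ⟨_, rfl, P, hP, hPs, -⟩ := exists_isPath_first_mem hs (ht 0) (ht 1) rfl
  obtain ⟨c, hc, Q, hQ, hQs, hQP⟩ :=
    exists_isPath_first_mem hs (ht 2) (ht 0) (T := {v | v ∈ P.support}) P.start_mem_support
  have htake : ∀ v ∈ (P.takeUntil c hc).support, v ∈ P.support := fun v hv =>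
    P.support_takeUntil_subset_support hc hv
  have hdrop : ∀ v ∈ (P.dropUntil c hc).support, v ∈ P.support := fun v hv =>
    P.support_dropUntil_subset_support hc hv
  have ht' : t = ![t 0, t 1, t 2] := by
    ext n
    fin_cases n <;> rfl
  rw [ht']
  refine ⟨Spider.mk₃ (hPs c hc) (P.takeUntil c hc).reverse (P.dropUntil c hc) Q.reverse
    (hP.takeUntil hc).reverse (hP.dropUntil hc) hQ.reverse ?_ (fun v hv => hPs v (hdrop v hv)) ?_
    ?_ ?_ ?_⟩ <;> simp only [support_reverse, List.mem_reverse]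
  · exact fun v hv => hPs v (htake v hv)
  · exact hQs
  · exact fun v hv hv' => hP.eq_of_mem_takeUntil_of_mem_dropUntil hc hv hv'
  · exact fun v hv hv' => hQP v hv' (htake v hv)
  · exact fun v hv hv' => hQP v hv' (hdrop v hv)

def HasDoubleSpider (G : SimpleGraph V) (s : Set V) (t₁ t₂ t₃ t₄ : V) : Prop :=
  ∃ s₁ s₂ : Set V, s₁ ⊆ s ∧ s₂ ⊆ s ∧ Disjoint s₁ s₂ ∧ ∃ r₁ r₂, G.Adj r₁ r₂ ∧
    Nonempty (Spider G s₁ ![r₁, t₁, t₂]) ∧ Nonempty (Spider G s₂ ![r₂, t₃, t₄])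

/-- Cutting the `k`-th leg between the center and its next vertex `w` leaves a spider at the
center with legs `nil, k + 1, k + 2`, and one at `d` with legs back to `w`, on to `t k`, and
along `Q` to `u`. -/
theorem Spider.hasDoubleSpider {s : Set V} {t : Fin 3 → V} (S : Spider G s t) {u d : V}
    (Q : G.Walk u d) (hQ : Q.IsPath) (hQs : ∀ v ∈ Q.support, v ∈ s)
    (hQS : ∀ v ∈ Q.support, ∀ k, v ∈ (S.leg k).support → v = d) {k : Fin 3}
    (hd : d ∈ (S.leg k).support) (hdc : d ≠ S.center) :
    HasDoubleSpider G s (t (k + 1)) (t (k + 2)) (t k) u := by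
  classical
  have hL := S.isPath_leg k
  set D := (S.leg k).dropUntil d hd
  obtain ⟨w, hw, R, hR⟩ := exists_eq_cons_of_ne hdc.symm ((S.leg k).takeUntil d hd)
  have hwR : (cons hw R).IsPath := hR ▸ hL.takeUntil hd
  have hR_take : ∀ v ∈ R.support, v ∈ ((S.leg k).takeUntil d hd).support := fun v hv => by
    rw [hR, support_cons]
    exact .tail _ hv
  have hRL : ∀ v ∈ R.support, v ∈ (S.leg k).support := fun v hv =>
    (S.leg k).support_takeUntil_subset_support hd (hR_take v hv)
  have hDL : ∀ v ∈ D.support, v ∈ (S.leg k).support := fun v hv =>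
    (S.leg k).support_dropUntil_subset_support hd hv
  have hRD : ∀ v ∈ R.support, v ∈ D.support → v = d := fun v hv hv' =>
    hL.eq_of_mem_takeUntil_of_mem_dropUntil hd (hR_take v hv) hv'
  have hcD : S.center ∉ D.support := fun hc =>
    hdc (hL.eq_of_mem_takeUntil_of_mem_dropUntil hd (start_mem_support _) hc).symm
  have hother : ∀ j ≠ k, ∀ v ∈ (S.leg j).support,
      ¬(v ∈ R.support ∨ v ∈ D.support ∨ v ∈ Q.support) := by
    rintro j hj v hv (hv' | hv' | hv')
    · exact ((cons_isPath_iff hw R).mp hwR).2 (S.eq_center_of_mem j k hj v hv (hRL v hv') ▸ hv')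
    · exact hcD (S.eq_center_of_mem j k hj v hv (hDL v hv') ▸ hv')
    · obtain rfl := hQS v hv' j hv
      exact hdc (S.eq_center_of_mem j k hj v hv hd)
  have hk : k + 1 ≠ k ∧ k + 2 ≠ k ∧ k + 1 ≠ k + 2 := by
    have : ∀ k : Fin 3, k + 1 ≠ k ∧ k + 2 ≠ k ∧ k + 1 ≠ k + 2 := by decide
    exact this k
  refine ⟨{v | v ∈ (S.leg (k + 1)).support ∨ v ∈ (S.leg (k + 2)).support},
    {v | v ∈ R.support ∨ v ∈ D.support ∨ v ∈ Q.support}, ?_, ?_, ?_, S.center, w, hw,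
    ⟨Spider.mk₃ (.inl (start_mem_support _)) nil (S.leg (k + 1)) (S.leg (k + 2)) .nil
      (S.isPath_leg _) (S.isPath_leg _) ?_ (fun v => .inl) (fun v => .inr) ?_ ?_
      (S.eq_center_of_mem _ _ hk.2.2)⟩,
    ⟨Spider.mk₃ (.inr (.inl D.start_mem_support)) R.reverse D Q.reverse hwR.of_cons.reverse
      (hL.dropUntil hd) hQ.reverse ?_ (fun v => .inr ∘ .inl) ?_ ?_ ?_ ?_⟩⟩
  · rintro v (hv | hv) <;> exact S.mem_of_mem_leg _ v hv
  · rintro v (hv | hv | hv)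
    exacts [S.mem_of_mem_leg k v (hRL v hv), S.mem_of_mem_leg k v (hDL v hv), hQs v hv]
  · refine Set.disjoint_left.mpr ?_
    rintro v (hv | hv)
    exacts [hother _ hk.1 v hv, hother _ hk.2.1 v hv]
  all_goals intro v
  all_goals simp only [support_nil, List.mem_singleton, support_reverse, List.mem_reverse]
  · rintro rfl
    exact .inl (start_mem_support _)
  · exact fun hv _ => hv
  · exact fun hv _ => hv
  · exact .inl
  · exact fun hv => .inr (.inr hv)
  · exact hRD v
  · exact fun hv hv' => hQS v hv' k (hRL v hv)
  · exact fun hv hv' => hQS v hv' k (hDL v hv)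

theorem nonempty_spider_or_hasDoubleSpider {s : Set V} (hs : (G.induce s).Preconnected)
    (t : Fin 4 → V) (ht : ∀ n, t n ∈ s) :
    Nonempty (Spider G s t) ∨ ∃ σ : Fin 4 → Fin 4, σ.Injective ∧
      HasDoubleSpider G s (t (σ 0)) (t (σ 1)) (t (σ 2)) (t (σ 3)) := by
  obtain ⟨S⟩ := nonempty_spider_fin_three hs (fun k => t k.castSucc) fun k => ht _
  obtain ⟨d, ⟨k, hd⟩, Q, hQ, hQs, hQS⟩ := exists_isPath_first_mem hs (ht (Fin.last 3))
    S.center_mem (T := {v | ∃ k, v ∈ (S.leg k).support}) ⟨0, (S.leg 0).start_mem_support⟩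
  by_cases hdc : d = S.center
  · subst hdc
    refine .inl ⟨S.snoc Q.reverse hQ.reverse (by simpa using hQs) fun j v hv hv' => ?_⟩
    exact hQS v (by simpa using hv) ⟨j, hv'⟩
  · refine .inr ⟨![(k + 1).castSucc, (k + 2).castSucc, k.castSucc, Fin.last 3], ?_,
      S.hasDoubleSpider Q hQ hQs (fun v hv j hj => hQS v hv ⟨j, hj⟩) hd hdc⟩
    have : ∀ k : Fin 3,
        Function.Injective ![(k + 1).castSucc, (k + 2).castSucc, k.castSucc, Fin.last 3] := by
      decide
    exact this k

def SubdivisionModel.ofSpiders (cell : W → Set V)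
    (hcell : Pairwise fun p q => Disjoint (cell p) (cell q)) (e : W → W → V)
    (he : ∀ p q, H.Adj p q → G.Adj (e p q) (e q p))
    (S : ∀ p, Spider G (cell p) fun q : H.neighborSet p => e p q) : SubdivisionModel H G :=
  have eq_of_mem {p p' v} (hv : v ∈ cell p) (hv' : v ∈ cell p') : p = p' := by
    by_contra hne
    exact Set.disjoint_left.mp (hcell hne) hv hv'
  { branch p := (S p).center
    path i j h := ((S i).leg ⟨j, h⟩).append (cons (he i j h) ((S j).leg ⟨i, h.symm⟩).reverse)
    branch_injective i j (hij : (S i).center = (S j).center) :=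
      eq_of_mem (S i).center_mem (hij ▸ (S j).center_mem)
    isPath i j h := isPath_append_cons _ ((S i).isPath_leg _) ((S j).isPath_leg _).reverse
      fun v hv hv' => h.ne (eq_of_mem ((S i).mem_of_mem_leg _ v hv)
        ((S j).mem_of_mem_leg _ v (by simpa using hv')))
    eq_or_eq_of_branch_mem i j h w hw := by
      rcases (mem_support_append_cons_reverse _).mp hw with hw | hw
      · exact .inl (eq_of_mem (S w).center_mem ((S i).mem_of_mem_leg _ _ hw))
      · exact .inr (eq_of_mem (S w).center_mem ((S j).mem_of_mem_leg _ _ hw))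
    sym2_eq_of_mem i j k l h h' v hv hvij hvkl := by
      have key {p p' q q'} {hq : H.Adj p q} {hq' : H.Adj p' q'}
          (h₁ : v ∈ ((S p).leg ⟨q, hq⟩).support) (h₂ : v ∈ ((S p').leg ⟨q', hq'⟩).support) :
          p = p' ∧ q = q' := by
        obtain rfl := eq_of_mem ((S p).mem_of_mem_leg _ v h₁) ((S p').mem_of_mem_leg _ v h₂)
        exact ⟨rfl, congrArg Subtype.val ((S p).eq_of_mem_leg h₁ h₂ fun hc => hv ⟨p, hc.symm⟩)⟩
      rcases (mem_support_append_cons_reverse _).mp hvij with h₁ | h₁ <;>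
        rcases (mem_support_append_cons_reverse _).mp hvkl with h₂ | h₂ <;>
        obtain ⟨rfl, rfl⟩ := key h₁ h₂
      exacts [rfl, Sym2.eq_swap, Sym2.eq_swap, rfl] }

theorem isTopologicalMinor_of_spiders [Finite V] (cell : W → Set V)
    (hcell : Pairwise fun p q => Disjoint (cell p) (cell q)) (e : W → W → V)
    (he : ∀ p q, H.Adj p q → G.Adj (e p q) (e q p))
    (S : ∀ p, Spider G (cell p) fun q : H.neighborSet p => e p q) : IsTopologicalMinor H G :=
  (SubdivisionModel.ofSpiders cell hcell e he S).isTopologicalMinor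

theorem exists_edge_ends [LinearOrder W] (f : W → Set V) (hne : ∀ p, (f p).Nonempty)
    (hf : ∀ p q, H.Adj p q → ∃ u ∈ f p, ∃ v ∈ f q, G.Adj u v) :
    ∃ e : W → W → V, (∀ p q, e p q ∈ f p) ∧ ∀ p q, H.Adj p q → G.Adj (e p q) (e q p) := by
  classical
  choose u hu v hv huv using hf
  refine ⟨fun p q => if h : H.Adj p q then if p < q then u p q h else v q p h.symm
    else (hne p).some, fun p q => ?_, fun p q h => ?_⟩
  · dsimp only
    split_ifs
    exacts [hu .., hv .., (hne p).some_mem]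
  · rcases lt_trichotomy p q with hpq | rfl | hpq
    · simp [h, h.symm, hpq, hpq.not_gt, huv]
    · exact absurd h (H.irrefl)
    · simp [h, h.symm, hpq, hpq.not_gt, (huv q p h.symm).symm]

theorem isTopologicalMinor_top_of_spiders [Finite V] {n : ℕ} (f : Fin (n + 1) → Set V)
    (hf : Pairwise fun i j => Disjoint (f i) (f j)) (e : Fin (n + 1) → Fin (n + 1) → V)
    (he : ∀ i j, i ≠ j → G.Adj (e i j) (e j i))
    (S : ∀ i, Spider G (f i) fun k => e i (i.succAbove k)) :
    IsTopologicalMinor (⊤ : SimpleGraph (Fin (n + 1))) G := by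
  refine isTopologicalMinor_of_spiders f hf e he fun i => (S i).reindex
    (fun j => (Fin.exists_succAbove_eq (Ne.symm j.2)).choose) (fun j j' h => ?_) _
    fun j => by rw [(Fin.exists_succAbove_eq (Ne.symm j.2)).choose_spec]
  apply Subtype.ext
  rw [← (Fin.exists_succAbove_eq (Ne.symm j.2)).choose_spec,
    ← (Fin.exists_succAbove_eq (Ne.symm j'.2)).choose_spec]
  exact congrArg _ h

theorem isTopologicalMinor_completeBipartiteGraph_of_spiders [Finite V] {α β : Type}
    (cell : α ⊕ β → Set V) (hcell : Pairwise fun p q => Disjoint (cell p) (cell q))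
    (eL : α → β → V) (eR : β → α → V) (he : ∀ a b, G.Adj (eL a b) (eR b a))
    (SL : ∀ a, Nonempty (Spider G (cell (.inl a)) (eL a)))
    (SR : ∀ b, Nonempty (Spider G (cell (.inr b)) (eR b))) :
    IsTopologicalMinor (completeBipartiteGraph α β) G := by
  let e : α ⊕ β → α ⊕ β → V
    | .inl a, .inr b => eL a b
    | .inr b, .inl a => eR b a
    | .inl a, .inl _ => (SL a).some.center
    | .inr b, .inr _ => (SR b).some.center
  refine isTopologicalMinor_of_spiders cell hcell e ?_ ?_
  · rintro (a | b) (a' | b') h <;> simp at h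
    exacts [he a b', (he a' b).symm]
  · rintro (a | b)
    · refine (SL a).some.reindex (fun | ⟨.inr b, _⟩ => b | ⟨.inl _, h⟩ => absurd h (by simp))
        ?_ _ ?_
      · rintro ⟨_ | b, hb⟩ ⟨_ | b', hb'⟩ h <;> simp at hb hb' ⊢
        exact h
      · rintro ⟨_ | b, hb⟩
        · simp at hb
        · rfl
    · refine (SR b).some.reindex (fun | ⟨.inl a, _⟩ => a | ⟨.inr _, h⟩ => absurd h (by simp))
        ?_ _ ?_
      · rintro ⟨a | _, ha⟩ ⟨a' | _, ha'⟩ h <;> simp at ha ha' ⊢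
        exact h
      · rintro ⟨a | _, ha⟩
        · rfl
        · simp at ha

/-- The half of `f 0` reaching `f 1, f 2` forms one side of the `K₃,₃` with `f 3, f 4`, the half
reaching `f 3, f 4` the other side with `f 1, f 2`. -/
theorem isTopologicalMinor_completeBipartiteGraph_of_hasDoubleSpider [Finite V]
    (f : Fin 5 → Set V) (hf : Pairwise fun i j => Disjoint (f i) (f j))
    (hconn : ∀ i, (G.induce (f i)).Preconnected) (e : Fin 5 → Fin 5 → V)
    (hef : ∀ i j, e i j ∈ f i) (he : ∀ i j, i ≠ j → G.Adj (e i j) (e j i))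
    (hD : HasDoubleSpider G (f 0) (e 0 1) (e 0 2) (e 0 3) (e 0 4)) :
    IsTopologicalMinor (completeBipartiteGraph (Fin 3) (Fin 3)) G := by
  obtain ⟨s₁, s₂, hs₁, hs₂, hs₁₂, r₁, r₂, hr, S₁, S₂⟩ := hD
  have h₁ (j : Fin 5) (hj : j ≠ 0) : Disjoint s₁ (f j) := (hf hj.symm).mono_left hs₁
  have h₂ (j : Fin 5) (hj : j ≠ 0) : Disjoint s₂ (f j) := (hf hj.symm).mono_left hs₂
  refine isTopologicalMinor_completeBipartiteGraph_of_spiders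
    (Sum.elim ![s₁, f 3, f 4] ![s₂, f 1, f 2]) ?_
    ![![r₁, e 0 1, e 0 2], ![e 3 0, e 3 1, e 3 2], ![e 4 0, e 4 1, e 4 2]]
    ![![r₂, e 0 3, e 0 4], ![e 1 0, e 1 3, e 1 4], ![e 2 0, e 2 3, e 2 4]] ?_ ?_ ?_
  · rintro (a | a) (b | b) hab <;> fin_cases a <;> fin_cases b <;> simp at hab ⊢
    all_goals first
      | exact hs₁₂ | exact hs₁₂.symm
      | exact h₁ _ (by decide) | exact (h₁ _ (by decide)).symm
      | exact h₂ _ (by decide) | exact (h₂ _ (by decide)).symm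
      | exact hf (by decide)
  · intro a b
    fin_cases a <;> fin_cases b
    all_goals first | exact hr | exact he _ _ (by decide)
  · intro a
    fin_cases a
    · exact S₁
    all_goals exact nonempty_spider_fin_three (hconn _) _ fun n => by fin_cases n <;> exact hef _ _
  · intro b
    fin_cases b
    · exact S₂
    all_goals exact nonempty_spider_fin_three (hconn _) _ fun n => by fin_cases n <;> exact hef _ _

theorem topMinor_k33_or_k5_of_k5_minor_general {V : Type} [Fintype V]
    (G : SimpleGraph V) (h : IsMinor (⊤ : SimpleGraph (Fin 5)) G) :
    IsTopologicalMinor (completeBipartiteGraph (Fin 3) (Fin 3)) G ∨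
    IsTopologicalMinor (⊤ : SimpleGraph (Fin 5)) G := by
  obtain ⟨f, hne, hf, hconn, hadj⟩ := h
  obtain ⟨e, hef, he⟩ := exists_edge_ends f hne hadj
  by_cases hS : ∀ i, Nonempty (Spider G (f i) fun k => e i (i.succAbove k))
  · exact .inr (isTopologicalMinor_top_of_spiders f hf e he fun i => (hS i).some)
  obtain ⟨i, hi⟩ := not_forall.mp hS
  obtain ⟨σ, hσ, hD⟩ := (nonempty_spider_or_hasDoubleSpider (hconn i).preconnected
    (fun k => e i (i.succAbove k)) fun k => hef i _).resolve_left hi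
  -- relabel the branch sets so that `f i` becomes `f 0` and its halves reach `1, 2` and `3, 4`
  let J : Fin 5 → Fin 5 := Fin.cons i (i.succAbove ∘ σ)
  have hJ : J.Injective := Fin.cons_injective_iff.mpr
    ⟨fun ⟨k, hk⟩ => Fin.succAbove_ne _ _ hk, (Fin.succAbove_right_injective).comp hσ⟩
  exact .inl (isTopologicalMinor_completeBipartiteGraph_of_hasDoubleSpider (f ∘ J)
    (hf.comp_of_injective hJ) (fun k => (hconn (J k)).preconnected) (fun k l => e (J k) (J l))
    (fun k l => hef _ _) (fun k l hkl => he _ _ (hJ.ne hkl)) hD)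

/-- If `K₅` is a minor of `G`, then `G` contains a subdivision of `K₃,₃` or a subdivision of
`K₅` as a subgraph. -/
theorem topMinor_k33_or_k5_of_k5_minor {V : Type} [Fintype V] [Nonempty V]
    (G : SimpleGraph V) (h : IsMinor (⊤ : SimpleGraph (Fin 5)) G) :
    IsTopologicalMinor (completeBipartiteGraph (Fin 3) (Fin 3)) G ∨
    IsTopologicalMinor (⊤ : SimpleGraph (Fin 5)) G :=
  topMinor_k33_or_k5_of_k5_minor_general G h
end

section
/- For every k ≥ 2, there exists a constant c(k) such that every graph G with chromatic number at least c(k) has the complete graph K_k as a minor. -/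
open SimpleGraph

/-!
Induct on `k`: a graph that is not `(2 ^ k - 1)`-colourable has a `K_k` minor. Some connected
component is still not colourable; fix a root `c` in it. If every distance level
`{v | dist c v = n + 1}` were `m`-colourable, a palette of `m` colours per parity of the level
plus one colour for `c` would colour the component with `2m + 1` colours, since edges only join
equal or consecutive levels. So for `m = 2 ^ k - 1` some level carries a `K_k` minor by
induction, and the ball `{v | dist c v < n + 1}` is connected, disjoint from that level and
adjacent to each of its vertices: it is one more branch set.
-/

theorem SimpleGraph.Connected.induce_image {V W : Type} {G : SimpleGraph V} {H : SimpleGraph W}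
    {s : Set W} (hs : (H.induce s).Connected) (φ : H →g G) : (G.induce (φ '' s)).Connected :=
  hs.map (induceHom φ (Set.mapsTo_image φ s)) (Set.surjective_mapsTo_image_restrict φ s)

theorem IsMinor.map {U V W : Type} {H : SimpleGraph U} {G : SimpleGraph V} {G' : SimpleGraph W}
    (h : IsMinor H G) (φ : G ↪g G') : IsMinor H G' := by
  obtain ⟨f, hne, hdisj, hconn, hadj⟩ := h
  refine ⟨fun i => φ '' f i, fun i => (hne i).image φ,
    fun i j hij => (Set.disjoint_image_iff φ.injective).2 (hdisj hij),
    fun i => (hconn i).induce_image φ.toHom, fun i j hij => ?_⟩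
  obtain ⟨u, hu, w, hw, huw⟩ := hadj i j hij
  exact ⟨φ u, Set.mem_image_of_mem φ hu, φ w, Set.mem_image_of_mem φ hw,
    φ.map_adj_iff.2 huw⟩

namespace SimpleGraph

variable {V : Type} {G : SimpleGraph V}

theorem isMinor_top_succ_of_isMinor_induce {k : ℕ} {B s : Set V} (hB : (G.induce B).Connected)
    (hBs : Disjoint B s) (hsB : ∀ x ∈ s, ∃ b ∈ B, G.Adj b x)
    (h : IsMinor (⊤ : SimpleGraph (Fin k)) (G.induce s)) :
    IsMinor (⊤ : SimpleGraph (Fin (k + 1))) G := by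
  obtain ⟨f, hne, hdisj, hconn, hadj⟩ := h
  let F : Fin k → Set V := fun i => Subtype.val '' f i
  have hFs : ∀ i, F i ⊆ s := fun i => Subtype.coe_image_subset s (f i)
  have hcone : ∀ i, ∃ b ∈ B, ∃ x ∈ F i, G.Adj b x := fun i => by
    obtain ⟨x, hx⟩ := hne i
    obtain ⟨b, hb, hbx⟩ := hsB x x.2
    exact ⟨b, hb, x, ⟨x, hx, rfl⟩, hbx⟩
  refine ⟨Fin.cons B F, ?_, ?_, ?_, ?_⟩
  · exact Fin.forall_fin_succ.2 ⟨Set.nonempty_coe_sort.1 hB.nonempty, fun i => (hne i).image _⟩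
  · intro i j hij
    cases i using Fin.cases <;> cases j using Fin.cases <;>
      simp only [Fin.cons_zero, Fin.cons_succ]
    · exact absurd rfl hij
    · exact hBs.mono_right (hFs _)
    · exact (hBs.mono_right (hFs _)).symm
    · exact (Set.disjoint_image_iff Subtype.val_injective).2
        (hdisj fun h => hij (congrArg Fin.succ h))
  · exact Fin.forall_fin_succ.2
      ⟨hB, fun i => (hconn i).induce_image (Embedding.induce s).toHom⟩
  · intro i j hij
    cases i using Fin.cases <;> cases j using Fin.cases <;>
      simp only [Fin.cons_zero, Fin.cons_succ]
    · exact absurd rfl hij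
    · exact hcone _
    · obtain ⟨b, hb, x, hx, hbx⟩ := hcone _
      exact ⟨x, hx, b, hb, hbx.symm⟩
    · obtain ⟨u, hu, w, hw, huw⟩ := hadj _ _ fun h => hij (congrArg Fin.succ h)
      exact ⟨u, ⟨u, hu, rfl⟩, w, ⟨w, hw, rfl⟩, huw⟩

theorem Connected.colorable_of_forall_colorable_dist_eq (hG : G.Connected) (c : V) {m : ℕ}
    (h : ∀ n, (G.induce {v | G.dist c v = n + 1}).Colorable m) : G.Colorable (2 * m + 1) := by
  let C n := (h n).some
  have hC : ∀ {n n'} (x : {v | G.dist c v = n + 1}) (y : {v | G.dist c v = n' + 1}),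
      n = n' → x.1 = y.1 → C n x = C n' y := by
    rintro n _ x y rfl hxy
    rw [Subtype.ext hxy]
  let f : V → Option (Bool × Fin m) := fun v =>
    if hv : G.dist c v = 0 then none
    else some (decide (Even (G.dist c v)), C (G.dist c v - 1) ⟨v, show _ = _ by omega⟩)
  refine (Coloring.mk f fun {u w} hadj hfuw => ?_).colorable.mono (by simp)
  have hpos : G.dist c u ≠ 0 ∨ G.dist c w ≠ 0 := by
    by_contra! h0
    exact hadj.ne ((hG.dist_eq_zero_iff.1 h0.1).symm.trans (hG.dist_eq_zero_iff.1 h0.2))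
  simp only [f] at hfuw
  split_ifs at hfuw with hu hw hw
  · omega
  · simp only [Option.some_inj, Prod.ext_iff, decide_eq_decide] at hfuw
    rcases hadj.diff_dist_adj (u := c) with hd | hd | hd
    · have hw' : w ∈ {v | G.dist c v = G.dist c u - 1 + 1} := show _ = _ by omega
      exact (C _).valid (show (G.induce _).Adj ⟨u, _⟩ ⟨w, hw'⟩ from hadj)
        (hfuw.2.trans (hC _ _ (by omega) rfl))
    all_goals grind [Nat.even_add_one]

theorem Connected.induce_dist_lt (hG : G.Connected) (c : V) {n : ℕ} (hn : 0 < n) :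
    (G.induce {v | G.dist c v < n}).Connected := by
  classical
  refine induce_connected_of_patches c (show G.dist c c < n by simpa using hn) fun {v} hv => ?_
  obtain ⟨p, hp⟩ := hG.exists_walk_length_eq_dist c v
  refine ⟨{x | x ∈ p.support}, fun x hx => ?_, p.start_mem_support, p.end_mem_support,
    p.connected_induce_support.preconnected _ _⟩
  calc G.dist c x ≤ (p.takeUntil x hx).length := dist_le _
    _ ≤ p.length := p.length_takeUntil_le_length hx
    _ < n := hp ▸ hv

theorem Connected.exists_adj_dist_lt (hG : G.Connected) {c v : V} {n : ℕ}
    (hv : G.dist c v = n + 1) : ∃ b, G.dist c b < n + 1 ∧ G.Adj b v := by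
  obtain ⟨p, hp⟩ := hG.exists_walk_length_eq_dist c v
  have hnil : ¬ p.Nil := by rw [← Walk.length_eq_zero_iff]; omega
  refine ⟨p.penultimate, ?_, p.adj_penultimate hnil⟩
  calc G.dist c p.penultimate ≤ p.dropLast.length := dist_le _
    _ < n + 1 := by rw [Walk.length_dropLast]; omega

theorem Connected.isMinor_top_succ {k m : ℕ} (hG : G.Connected)
    (ih : ∀ {W : Type} (H : SimpleGraph W), ¬ H.Colorable m →
      IsMinor (⊤ : SimpleGraph (Fin k)) H)
    (h : ¬ G.Colorable (2 * m + 1)) : IsMinor (⊤ : SimpleGraph (Fin (k + 1))) G := by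
  obtain ⟨c⟩ := hG.nonempty
  obtain ⟨n, hn⟩ : ∃ n, ¬ (G.induce {v | G.dist c v = n + 1}).Colorable m := by
    by_contra! hall
    exact h (hG.colorable_of_forall_colorable_dist_eq c hall)
  refine isMinor_top_succ_of_isMinor_induce (hG.induce_dist_lt c n.succ_pos) ?_
    (fun v hv => hG.exists_adj_dist_lt hv) (ih _ hn)
  exact Set.disjoint_left.2 fun v (hv : G.dist c v < n + 1) (hv' : G.dist c v = n + 1) => by omega

theorem isMinor_top_of_not_colorable (G : SimpleGraph V) (k : ℕ)
    (h : ¬ G.Colorable (2 ^ k - 1)) :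
    IsMinor (⊤ : SimpleGraph (Fin k)) G := by
  induction k generalizing V with
  | zero =>
    exact ⟨Fin.elim0, fun i => i.elim0, fun i => i.elim0, fun i => i.elim0, fun i => i.elim0⟩
  | succ k ih =>
    have hpow : 2 ^ (k + 1) - 1 = 2 * (2 ^ k - 1) + 1 := by
      have := Nat.one_le_two_pow (n := k)
      rw [pow_succ]
      omega
    rw [hpow, colorable_iff_forall_connectedComponent] at h
    obtain ⟨C, hC⟩ := not_forall.1 h
    exact (C.connected_toSimpleGraph.isMinor_top_succ (ih ·) hC).map (Embedding.induce _)

end SimpleGraph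

theorem exists_const_chromatic_forces_kk_minor_general (k : ℕ) :
    ∃ c : ℕ, ∀ (V : Type) [Fintype V] [Nonempty V] (G : SimpleGraph V),
      (c : ℕ∞) ≤ G.chromaticNumber → IsMinor (⊤ : SimpleGraph (Fin k)) G := by
  refine ⟨2 ^ k, fun V _ _ G hχ => isMinor_top_of_not_colorable G k fun hcol => ?_⟩
  have h : ((2 ^ k : ℕ) : ℕ∞) ≤ (2 ^ k - 1 : ℕ) := hχ.trans hcol.chromaticNumber_le
  have hpos := Nat.one_le_two_pow (n := k)
  norm_cast at h
  omega

/-- For every `k ≥ 2` there is a constant `c(k)` such that every graph with chromatic number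
at least `c(k)` has `K_k` as a minor. -/
theorem exists_const_chromatic_forces_kk_minor (k : ℕ) (hk : 2 ≤ k) :
    ∃ c : ℕ, ∀ (V : Type) [Fintype V] [Nonempty V] (G : SimpleGraph V),
      (c : ℕ∞) ≤ G.chromaticNumber → IsMinor (⊤ : SimpleGraph (Fin k)) G :=
  exists_const_chromatic_forces_kk_minor_general k
end
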